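/- arXiv:2307.11515 — 5 statements merged into one kernel-verified Lean document; each statement's English description precedes it below -/
import Mathlib

section
/- Let Ω ⊆ ℝⁿ be open, f : Ω → ℝⁿ locally Lipschitz, and H : Ω → [0,∞) be C¹ with ∇H(w)·f(w) ≤ c·H(w) + σ for all w ∈ Ω, for constants c, σ ≥ 0. Suppose that for every r the sublevel set S_r = {w ∈ Ω : H(w) ≤ r} has bounded image f(S_r), and for every r, ρ the set Q_{r,ρ} = {w ∈ Ω : H(w) ≤ r, |w| ≤ ρ} is compact. Then for every w₀ ∈ Ω the maximal solution of ẇ = f(w), w(0) = w₀ is defined for all t ≥ 0 and remains in Ω. -/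
open Set Metric Real

/-- Picard–Lindelöf giving also membership in the closed ball. -/
theorem aux_PL {E : Type*} [NormedAddCommGroup E] [NormedSpace ℝ E] [CompleteSpace E]
    {v : ℝ → E → E} {tMin t₀ tMax : ℝ} (x₀ : E) {R C L : NNReal} {ht₀ : t₀ ∈ Icc tMin tMax}
    (hpl : IsPicardLindelof v (⟨t₀, ht₀⟩ : Icc tMin tMax) x₀ R 0 C L) :
    ∃ f : ℝ → E, f t₀ = x₀ ∧ ∀ t ∈ Icc tMin tMax, f t ∈ closedBall x₀ R ∧
      HasDerivWithinAt f (v t (f t)) (Icc tMin tMax) t := by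
  have hx : x₀ ∈ closedBall x₀ ((0 : NNReal) : ℝ) := mem_closedBall_self le_rfl
  obtain ⟨α, hα⟩ := ODE.FunSpace.exists_isFixedPt_next hpl hx
  refine ⟨α.compProj, ?_, fun t ht => ⟨α.compProj_mem_closedBall hpl.mul_max_le, ?_⟩⟩
  · show α.compProj ((⟨t₀, ht₀⟩ : Icc tMin tMax) : ℝ) = x₀
    rw [ODE.FunSpace.compProj_val, ← hα, ODE.FunSpace.next_apply₀]
  · apply ODE.hasDerivWithinAt_picard_Icc ht₀ hpl.continuousOn_uncurry
      α.continuous_compProj.continuousOn (fun _ _ ↦ α.compProj_mem_closedBall hpl.mul_max_le)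
      x₀ ht |>.congr_of_mem _ ht
    intro t' ht'
    nth_rw 1 [← hα]
    rw [ODE.FunSpace.compProj_of_mem ht', ODE.FunSpace.next_apply]

/-- Locally Lipschitz functions are Lipschitz on compact subsets. -/
theorem aux_lip {E F : Type*} [NormedAddCommGroup E] [NormedAddCommGroup F]
    {Ω : Set E} {f : E → F}
    (hf : ∀ x ∈ Ω, ∃ K : NNReal, ∃ ε > (0:ℝ), LipschitzOnWith K f (ball x ε ∩ Ω))
    {Q : Set E} (hQ : IsCompact Q) (hQΩ : Q ⊆ Ω) :
    ∃ L : NNReal, LipschitzOnWith L f Q := by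
  rcases Q.eq_empty_or_nonempty with hQe | hQne
  · exact ⟨1, by simp [hQe]⟩
  choose K ε hε hlip using hf
  have hcont : ContinuousOn f Ω := by
    intro x hx
    have h1 : ContinuousWithinAt f (ball x (ε x hx) ∩ Ω) x :=
      (hlip x hx).continuousOn x ⟨mem_ball_self (hε x hx), hx⟩
    exact h1.mono_of_mem_nhdsWithin
      (Filter.inter_mem (nhdsWithin_le_nhds (ball_mem_nhds x (hε x hx))) self_mem_nhdsWithin)
  obtain ⟨D0, hD0⟩ := Metric.isBounded_iff.1 (hQ.image_of_continuousOn (hcont.mono hQΩ)).isBounded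
  set D := max D0 0 with hD_def
  have hDnn : 0 ≤ D := le_max_right _ _
  have hD : ∀ x ∈ Q, ∀ y ∈ Q, dist (f x) (f y) ≤ D := fun x hx y hy =>
    (hD0 (Set.mem_image_of_mem f hx) (Set.mem_image_of_mem f hy)).trans (le_max_left _ _)
  obtain ⟨t, ht⟩ := hQ.elim_finite_subcover (fun q : Q => ball (q : E) (ε q (hQΩ q.2) / 3))
    (fun q => isOpen_ball)
    (fun x hx => Set.mem_iUnion.2 ⟨⟨x, hx⟩, mem_ball_self (by linarith [hε x (hQΩ hx)])⟩)
  obtain ⟨x0, hx0⟩ := hQne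
  have htne : t.Nonempty := by
    rcases Set.mem_iUnion₂.1 (ht hx0) with ⟨i, hi, _⟩; exact ⟨i, hi⟩
  set e : ℝ := t.inf' htne fun q => ε q (hQΩ q.2) / 3 with he_def
  have hepos : 0 < e := by
    rw [he_def, Finset.lt_inf'_iff]
    exact fun q _ => by linarith [hε q (hQΩ q.2)]
  set L0 : NNReal := t.sup fun q => K q (hQΩ q.2) with hL0_def
  have hloc : ∀ x ∈ Q, ∀ y ∈ Q, dist x y < e → dist (f x) (f y) ≤ L0 * dist x y := by
    intro x hx y hy hxy
    rcases Set.mem_iUnion₂.1 (ht hx) with ⟨q, hqt, hxq⟩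
    have hεq := hε q (hQΩ q.2)
    have he3 : e ≤ ε q (hQΩ q.2) / 3 := Finset.inf'_le _ hqt
    rw [mem_ball] at hxq
    have h1 : x ∈ ball (q : E) (ε q (hQΩ q.2)) ∩ Ω := ⟨mem_ball.2 (by linarith), hQΩ hx⟩
    have h2 : y ∈ ball (q : E) (ε q (hQΩ q.2)) ∩ Ω := by
      refine ⟨mem_ball.2 ?_, hQΩ hy⟩
      have htri : dist y (q : E) ≤ dist y x + dist x (q : E) := dist_triangle _ _ _
      rw [dist_comm y x] at htri
      linarith
    have hle := (hlip q (hQΩ q.2)).dist_le_mul x h1 y h2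
    have hKL' : K q (hQΩ q.2) ≤ L0 := by
      rw [hL0_def]
      exact Finset.le_sup (f := fun q : Q => K q (hQΩ q.2)) hqt
    have hKL : (K q (hQΩ q.2) : ℝ) ≤ (L0 : ℝ) := by exact_mod_cast hKL'
    calc dist (f x) (f y) ≤ (K q (hQΩ q.2) : ℝ) * dist x y := hle
      _ ≤ (L0 : ℝ) * dist x y := mul_le_mul_of_nonneg_right hKL dist_nonneg
  refine ⟨L0 + Real.toNNReal (D / e), LipschitzOnWith.of_dist_le_mul fun x hx y hy => ?_⟩
  have hcoe : ((L0 + Real.toNNReal (D / e) : NNReal) : ℝ) = (L0 : ℝ) + D / e := by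
    push_cast [Real.coe_toNNReal _ (div_nonneg hDnn hepos.le)]
    ring
  rw [hcoe]
  rcases lt_or_ge (dist x y) e with hlt | hge
  · calc dist (f x) (f y) ≤ (L0 : ℝ) * dist x y := hloc x hx y hy hlt
      _ ≤ ((L0 : ℝ) + D / e) * dist x y := by
        have := div_nonneg hDnn hepos.le
        nlinarith [dist_nonneg (x := x) (y := y)]
  · have h1 : D ≤ D / e * dist x y := by
      rw [div_mul_eq_mul_div, le_div_iff₀ hepos]
      nlinarith
    calc dist (f x) (f y) ≤ D := hD x hx y hy
      _ ≤ D / e * dist x y := h1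
      _ ≤ ((L0 : ℝ) + D / e) * dist x y := by
        have hL0nn : (0:ℝ) ≤ (L0 : ℝ) := L0.coe_nonneg
        nlinarith [dist_nonneg (x := x) (y := y)]

theorem aux_gb_mono {δ K ε : ℝ} (hδ : 0 ≤ δ) (hK : 0 ≤ K) (hε : 0 ≤ ε) {x y : ℝ} (h : x ≤ y) :
    gronwallBound δ K ε x ≤ gronwallBound δ K ε y := by
  rcases eq_or_lt_of_le hK with hK0 | hKpos
  · rw [← hK0]
    simp only [gronwallBound_K0]
    nlinarith
  · rw [gronwallBound_of_K_ne_0 hKpos.ne']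
    simp only
    have h1 : Real.exp (K * x) ≤ Real.exp (K * y) :=
      Real.exp_le_exp.2 (by nlinarith)
    have h2 : 0 ≤ ε / K := div_nonneg hε hK
    nlinarith [Real.exp_pos (K * x)]

open scoped RealInnerProductSpace

theorem stmt_0 (n : ℕ) (Ω : Set (EuclideanSpace ℝ (Fin n))) (hΩ : IsOpen Ω)
    (f : EuclideanSpace ℝ (Fin n) → EuclideanSpace ℝ (Fin n))
    (hf : ∀ x ∈ Ω, ∃ K : NNReal, ∃ ε > (0:ℝ), LipschitzOnWith K f (Metric.ball x ε ∩ Ω))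
    (H : EuclideanSpace ℝ (Fin n) → ℝ)
    (gradH : EuclideanSpace ℝ (Fin n) → EuclideanSpace ℝ (Fin n))
    (hH0 : ∀ w ∈ Ω, 0 ≤ H w)
    (hHgrad : ∀ w ∈ Ω, HasGradientAt H (gradH w) w)
    (hgradcont : ContinuousOn gradH Ω)
    (c σ : ℝ) (hc : 0 ≤ c) (hσ : 0 ≤ σ)
    (hineq : ∀ w ∈ Ω, ⟪gradH w, f w⟫ ≤ c * H w + σ)
    (hbdd : ∀ r : ℝ, Bornology.IsBounded (f '' {w ∈ Ω | H w ≤ r}))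
    (hcpt : ∀ r ρ : ℝ, IsCompact {w ∈ Ω | H w ≤ r ∧ ‖w‖ ≤ ρ})
    (w₀ : EuclideanSpace ℝ (Fin n)) (hw₀ : w₀ ∈ Ω) :
    ∃ w : ℝ → EuclideanSpace ℝ (Fin n), w 0 = w₀ ∧
      ∀ t ≥ (0:ℝ), w t ∈ Ω ∧ HasDerivAt w (f (w t)) t := by
  have hHw₀ : 0 ≤ H w₀ := hH0 w₀ hw₀
  set G : ℝ → ℝ := fun t => gronwallBound (H w₀) c σ t with hG_def
  have hGmono : ∀ {x y : ℝ}, x ≤ y → G x ≤ G y := fun h => aux_gb_mono hHw₀ hc hσ h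
  have hG0 : G 0 = H w₀ := gronwallBound_x0 _ _ _
  set Sol : ℝ → (ℝ → EuclideanSpace ℝ (Fin n)) → Prop := fun T w =>
    w 0 = w₀ ∧ ∀ t ∈ Icc (0:ℝ) T, w t ∈ Ω ∧ HasDerivWithinAt w (f (w t)) (Icc (0:ℝ) T) t
    with hSol_def
  -- restriction of solutions to smaller intervals
  have hrestrict : ∀ T' T w, T' ≤ T → Sol T w → Sol T' w := by
    intro T' T w hT' ⟨hw0, hw⟩
    refine ⟨hw0, fun t ht => ?_⟩
    have ht' : t ∈ Icc (0:ℝ) T := ⟨ht.1, ht.2.trans hT'⟩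
    exact ⟨(hw t ht').1, (hw t ht').2.mono (Icc_subset_Icc le_rfl hT')⟩
  -- continuity
  have hcontOn : ∀ T w, Sol T w → ContinuousOn w (Icc (0:ℝ) T) := by
    intro T w hw t ht
    exact (hw.2 t ht).2.continuousWithinAt
  -- one-sided derivatives
  have hIci : ∀ T w, Sol T w → ∀ t ∈ Ico (0:ℝ) T, HasDerivWithinAt w (f (w t)) (Ici t) t := by
    intro T w hw t ht
    have h1 := (hw.2 t ⟨ht.1, ht.2.le⟩).2
    exact (h1.mono (Icc_subset_Icc_left ht.1)).mono_of_mem_nhdsWithin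
      (Icc_mem_nhdsGE_of_mem ⟨le_rfl, ht.2⟩)
  -- Gronwall bound on H along solutions
  have hbound : ∀ T, 0 ≤ T → ∀ w, Sol T w → ∀ t ∈ Icc (0:ℝ) T, H (w t) ≤ G t := by
    intro T hT w hw t ht
    have hHc : ContinuousOn (fun s => H (w s)) (Icc (0:ℝ) T) := by
      intro s hs
      exact ((hHgrad (w s) (hw.2 s hs).1).differentiableAt.continuousAt).comp_continuousWithinAt
        (hcontOn T w hw s hs)
    have hder : ∀ s ∈ Ico (0:ℝ) T,
        HasDerivWithinAt (fun u => H (w u)) (⟪gradH (w s), f (w s)⟫) (Ici s) s := by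
      intro s hs
      have h1 := (hHgrad (w s) (hw.2 s ⟨hs.1, hs.2.le⟩).1).hasFDerivAt.comp_hasDerivWithinAt s
        (hIci T w hw s hs)
      simpa [InnerProductSpace.toDual_apply_apply, Function.comp_def] using h1
    have := le_gronwallBound_of_liminf_deriv_right_le hHc
      (fun s hs r hr => ((hder s hs).liminf_right_slope_le hr)) (by rw [hw.1])
      (fun s hs => hineq (w s) (hw.2 s ⟨hs.1, hs.2.le⟩).1) t ht
    simpa using this
  -- bound on the norm of f on sublevel sets
  have hMex : ∀ r : ℝ, ∃ M, 0 ≤ M ∧ ∀ x ∈ Ω, H x ≤ r → ‖f x‖ ≤ M := by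
    intro r
    obtain ⟨M0, hM0⟩ := isBounded_iff_forall_norm_le.1 (hbdd r)
    exact ⟨max M0 0, le_max_right _ _, fun x hx hHx =>
      (hM0 _ (Set.mem_image_of_mem f ⟨hx, hHx⟩)).trans (le_max_left _ _)⟩
  -- norm bound along solutions
  have hnormb : ∀ T, 0 ≤ T → ∀ M, (∀ x ∈ Ω, H x ≤ G T → ‖f x‖ ≤ M) →
      ∀ w, Sol T w → ∀ t ∈ Icc (0:ℝ) T, ‖w t‖ ≤ ‖w₀‖ + M * t := by
    intro T hT M hM w hw t ht
    have := norm_le_gronwallBound_of_norm_deriv_right_le (f := w) (f' := fun s => f (w s))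
      (δ := ‖w₀‖) (K := 0) (ε := M) (a := 0) (b := T) (hcontOn T w hw) (hIci T w hw)
      (by rw [hw.1]) ?_ t ht
    · simpa [gronwallBound_K0] using this
    · intro s hs
      have hmem := (hw.2 s ⟨hs.1, hs.2.le⟩).1
      have hHs : H (w s) ≤ G T := (hbound T hT w hw s ⟨hs.1, hs.2.le⟩).trans (hGmono hs.2.le)
      simpa using hM (w s) hmem hHs
  have main : ∀ T, 0 ≤ T → ∃ w, Sol T w := by
    intro T hT
    obtain ⟨M, hMnn, hM⟩ := hMex (G T)
    set ρ := ‖w₀‖ + M * T with hρ_def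
    set Q : Set (EuclideanSpace ℝ (Fin n)) := {x ∈ Ω | H x ≤ G T ∧ ‖x‖ ≤ ρ} with hQ_def
    have hQcpt : IsCompact Q := hcpt _ _
    have hQΩ : Q ⊆ Ω := fun x hx => hx.1
    obtain ⟨δ, hδpos, hδsub⟩ := hQcpt.exists_cthickening_subset_open hΩ hQΩ
    set Q' := Metric.cthickening δ Q with hQ'_def
    have hQ'cpt : IsCompact Q' := hQcpt.cthickening
    obtain ⟨L, hL⟩ := aux_lip hf hQ'cpt hδsub
    obtain ⟨C0, hC0⟩ :=
      isBounded_iff_forall_norm_le.1 (hQ'cpt.image_of_continuousOn hL.continuousOn).isBounded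
    set C := max C0 0 with hC_def
    have hCnn : 0 ≤ C := le_max_right _ _
    have hC : ∀ x ∈ Q', ‖f x‖ ≤ C := fun x hx =>
      (hC0 _ (Set.mem_image_of_mem f hx)).trans (le_max_left _ _)
    set τ := δ / (C + 1) with hτ_def
    have hτpos : 0 < τ := div_pos hδpos (by linarith)
    set A := {a | a ∈ Icc (0:ℝ) T ∧ ∃ w, Sol a w} with hA_def
    have h0A : (0:ℝ) ∈ A := by
      refine ⟨⟨le_rfl, hT⟩, fun t => w₀ + t • f w₀, by simp, fun t ht => ?_⟩
      have ht0 : t = 0 := le_antisymm ht.2 ht.1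
      subst ht0
      have hd : HasDerivAt (fun t : ℝ => w₀ + t • f w₀) (f w₀) 0 := by
        simpa using ((hasDerivAt_id (0:ℝ)).smul_const (f w₀)).const_add w₀
      refine ⟨by simpa using hw₀, ?_⟩
      simp only [zero_smul, add_zero]
      exact hd.hasDerivWithinAt
    have hAne : A.Nonempty := ⟨0, h0A⟩
    have hAbdd : BddAbove A := ⟨T, fun a ha => ha.1.2⟩
    have hQmem : ∀ a, a ∈ Icc (0:ℝ) T → ∀ w, Sol a w → ∀ t ∈ Icc (0:ℝ) a, w t ∈ Q := by
      intro a ha w hw t ht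
      have hMa : ∀ x ∈ Ω, H x ≤ G a → ‖f x‖ ≤ M := fun x hx hHx =>
        hM x hx (hHx.trans (hGmono ha.2))
      have hn := hnormb a ha.1 M hMa w hw t ht
      refine ⟨(hw.2 t ht).1, (hbound a ha.1 w hw t ht).trans (hGmono (ht.2.trans ha.2)), ?_⟩
      have h1 : M * t ≤ M * T := mul_le_mul_of_nonneg_left (ht.2.trans ha.2) hMnn
      rw [hρ_def]; linarith
    have hstep : ∀ a, a ∈ A → a < T → min T (a + τ) ∈ A := by
      intro a haA haT
      obtain ⟨haI, w, hw⟩ := haA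
      have ha0 : 0 ≤ a := haI.1
      have hwaQ : w a ∈ Q := hQmem a haI w hw a ⟨ha0, le_rfl⟩
      have hball : Metric.closedBall (w a) δ ⊆ Q' := Metric.closedBall_subset_cthickening hwaQ δ
      have hCτ : C * τ ≤ δ := by
        rw [hτ_def, mul_div_assoc']
        rw [div_le_iff₀ (by linarith : (0:ℝ) < C + 1)]
        nlinarith
      have hpl : IsPicardLindelof (fun _ x => f x) (⟨a, le_rfl, by linarith⟩ : Icc a (a + τ))
          (w a) ⟨δ, hδpos.le⟩ 0 ⟨C, hCnn⟩ L := by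
        refine IsPicardLindelof.of_time_independent (fun x hx => hC x (hball hx)) (hL.mono hball) ?_
        show C * max (a + τ - a) (a - a) ≤ δ - ((0 : NNReal) : ℝ)
        rw [NNReal.coe_zero, sub_zero]
        have hmax : max (a + τ - a) (a - a) = τ := by
          rw [add_sub_cancel_left, sub_self, max_eq_left hτpos.le]
        rw [hmax]; exact hCτ
      obtain ⟨y, hy0, hy⟩ := aux_PL (w a) hpl
      set b := min T (a + τ) with hb_def
      have hb0 : 0 ≤ b := le_min hT (by linarith)
      have hbT : b ≤ T := min_le_left _ _
      have hbτ : b ≤ a + τ := min_le_right _ _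
      set v : ℝ → EuclideanSpace ℝ (Fin n) := fun t => if t ≤ a then w t else y t with hv_def
      have hveqw : Set.EqOn v w (Icc (0:ℝ) a) := fun t ht => if_pos ht.2
      have hveqy : Set.EqOn v y (Icc a (a + τ)) := by
        intro t ht
        by_cases h : t ≤ a
        · have ht0 : t = a := le_antisymm h ht.1
          subst ht0
          simp only [hv_def, if_pos le_rfl, hy0]
        · simp only [hv_def, if_neg h]
      have hyΩ : ∀ t ∈ Icc a (a + τ), y t ∈ Ω := fun t ht => hδsub (hball (hy t ht).1)
      refine ⟨⟨hb0, hbT⟩, v, ?_, fun t ht => ?_⟩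
      · show v 0 = w₀
        rw [hveqw ⟨le_rfl, ha0⟩, hw.1]
      rcases lt_trichotomy t a with hlt | heq | hgt
      · have htIcc : t ∈ Icc (0:ℝ) a := ⟨ht.1, hlt.le⟩
        refine ⟨by rw [hveqw htIcc]; exact (hw.2 t htIcc).1, ?_⟩
        have h2 : HasDerivWithinAt v (f (v t)) (Icc (0:ℝ) a) t := by
          rw [hveqw htIcc]
          exact ((hw.2 t htIcc).2).congr (fun s hs => hveqw hs) (hveqw htIcc)
        exact h2.mono_of_mem_nhdsWithin
          (mem_nhdsWithin.2 ⟨Iio a, isOpen_Iio, hlt, fun s hs => ⟨hs.2.1, hs.1.le⟩⟩)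
      · subst heq
        have htIcc : t ∈ Icc (0:ℝ) t := ⟨ht.1, le_rfl⟩
        have htIcc2 : t ∈ Icc t (t + τ) := ⟨le_rfl, by linarith⟩
        have hva : v t = w t := hveqw htIcc
        refine ⟨by rw [hva]; exact (hw.2 t htIcc).1, ?_⟩
        have hleft : HasDerivWithinAt v (f (v t)) (Icc (0:ℝ) t) t := by
          rw [hva]
          exact ((hw.2 t htIcc).2).congr (fun s hs => hveqw hs) hva
        have hright : HasDerivWithinAt v (f (v t)) (Icc t (t + τ)) t := by
          rw [hva, ← hy0]
          exact ((hy t htIcc2).2).congr (fun s hs => hveqy hs) (hveqy htIcc2)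
        have hu := hleft.union hright
        rw [Set.Icc_union_Icc_eq_Icc ht.1 (by linarith)] at hu
        exact hu.mono (Icc_subset_Icc le_rfl hbτ)
      · have htmem : t ∈ Icc a (a + τ) := ⟨hgt.le, ht.2.trans hbτ⟩
        refine ⟨by rw [hveqy htmem]; exact hyΩ t htmem, ?_⟩
        have h2 : HasDerivWithinAt v (f (v t)) (Icc a (a + τ)) t := by
          rw [hveqy htmem]
          exact ((hy t htmem).2).congr (fun s hs => hveqy hs) (hveqy htmem)
        exact h2.mono_of_mem_nhdsWithin
          (mem_nhdsWithin.2 ⟨Ioi a, isOpen_Ioi, hgt, fun s hs => ⟨hs.1.le, hs.2.2.trans hbτ⟩⟩)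
    set a₀ := sSup A with ha₀_def
    have ha₀T : a₀ ≤ T := csSup_le hAne fun a ha => ha.1.2
    have ha₀0 : 0 ≤ a₀ := le_csSup hAbdd h0A
    have hlower : ∀ b, 0 ≤ b → b < a₀ → b ∈ A := by
      intro b hb0 hba₀
      obtain ⟨a, haA, hba⟩ := exists_lt_of_lt_csSup hAne hba₀
      obtain ⟨haI, w, hw⟩ := haA
      exact ⟨⟨hb0, hba.le.trans haI.2⟩, w, hrestrict b a w hba.le hw⟩
    have ha₀A : a₀ ∈ A := by
      by_contra hne
      have ha₀pos : 0 < a₀ := by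
        rcases eq_or_lt_of_le ha₀0 with h | h
        · exact absurd (show a₀ ∈ A by rw [← h]; exact h0A) hne
        · exact h
      set a := max 0 (a₀ - τ / 2) with ha_def
      have halt : a < a₀ := max_lt ha₀pos (by linarith)
      have haA : a ∈ A := hlower a (le_max_left _ _) halt
      have haT : a < T := lt_of_lt_of_le halt ha₀T
      have hb := hstep a haA haT
      have hble : min T (a + τ) ≤ a₀ := le_csSup hAbdd hb
      have ha₀a : a₀ - τ / 2 ≤ a := le_max_right _ _
      rcases le_total T (a + τ) with hcase | hcase
      · rw [min_eq_left hcase] at hb hble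
        have hTa : a₀ = T := le_antisymm ha₀T hble
        exact hne (by rw [hTa]; exact hb)
      · rw [min_eq_right hcase] at hble
        linarith
    have ha₀eq : a₀ = T := by
      by_contra hne
      have hlt : a₀ < T := lt_of_le_of_ne ha₀T hne
      have hb := hstep a₀ ha₀A hlt
      have hble := le_csSup hAbdd hb
      rcases le_total T (a₀ + τ) with hcase | hcase
      · rw [min_eq_left hcase] at hble; linarith
      · rw [min_eq_right hcase] at hble; linarith
    obtain ⟨_, w, hw⟩ := ha₀A
    exact ⟨w, by rw [← ha₀eq]; exact hw⟩
  have uniq : ∀ T, 0 ≤ T → ∀ w1 w2, Sol T w1 → Sol T w2 → ∀ t ∈ Icc (0:ℝ) T, w1 t = w2 t := by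
    intro T hT w1 w2 hw1 hw2 t ht
    obtain ⟨M, hMnn, hM⟩ := hMex (G T)
    set Q : Set (EuclideanSpace ℝ (Fin n)) := {x ∈ Ω | H x ≤ G T ∧ ‖x‖ ≤ ‖w₀‖ + M * T}
      with hQ_def
    obtain ⟨L, hL⟩ := aux_lip hf (hcpt (G T) (‖w₀‖ + M * T)) (fun x hx => hx.1)
    have hQmem : ∀ w, Sol T w → ∀ s ∈ Icc (0:ℝ) T, w s ∈ Q := by
      intro w hw s hs
      have hn := hnormb T hT M hM w hw s hs
      refine ⟨(hw.2 s hs).1, (hbound T hT w hw s hs).trans (hGmono hs.2), ?_⟩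
      have h1 : M * s ≤ M * T := mul_le_mul_of_nonneg_left hs.2 hMnn
      linarith
    exact ODE_solution_unique_of_mem_Icc_right (v := fun _ => f) (s := fun _ => Q)
      (fun _ _ => hL) (hcontOn T w1 hw1) (hIci T w1 hw1)
      (fun s hs => hQmem w1 hw1 s ⟨hs.1, hs.2.le⟩)
      (hcontOn T w2 hw2) (hIci T w2 hw2)
      (fun s hs => hQmem w2 hw2 s ⟨hs.1, hs.2.le⟩)
      (by rw [hw1.1, hw2.1]) ht
  -- gluing
  have main' : ∀ T : ℝ, ∃ w, Sol (max T 0) w := fun T => main _ (le_max_right _ _)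
  choose sol hsol using main'
  have hagree : ∀ T1 T2 t : ℝ, 0 ≤ t → t ≤ max T1 0 → t ≤ max T2 0 → sol T1 t = sol T2 t := by
    intro T1 T2 t ht h1 h2
    have hTm0 : 0 ≤ min (max T1 0) (max T2 0) := le_min (le_max_right _ _) (le_max_right _ _)
    exact uniq _ hTm0 (sol T1) (sol T2)
      (hrestrict _ _ _ (min_le_left _ _) (hsol T1))
      (hrestrict _ _ _ (min_le_right _ _) (hsol T2)) t ⟨ht, le_min h1 h2⟩
  set W : ℝ → EuclideanSpace ℝ (Fin n) :=
    fun t => if 0 ≤ t then sol (t + 1) t else w₀ + t • f w₀ with hW_def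
  have hWeq : ∀ t : ℝ, 0 ≤ t → W t = sol (t + 1) t := fun t ht => if_pos ht
  have hW0 : W 0 = w₀ := by rw [hWeq 0 le_rfl, (hsol (0 + 1)).1]
  have hmaxle : ∀ t : ℝ, 0 ≤ t → t ≤ max (t + 1) 0 := fun t ht =>
    le_max_of_le_left (by linarith)
  refine ⟨W, hW0, fun t ht => ?_⟩
  have ht' : (0:ℝ) ≤ t := ht
  have hWt : W t = sol (t + 1) t := hWeq t ht'
  have hmem : W t ∈ Ω := by
    rw [hWt]
    exact ((hsol (t + 1)).2 t ⟨ht', hmaxle t ht'⟩).1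
  refine ⟨hmem, ?_⟩
  rcases eq_or_lt_of_le ht' with heq | htpos
  · -- t = 0
    have ht0 : t = 0 := heq.symm
    subst ht0
    have hkey : ∀ s ∈ Ico (0:ℝ) 1, W s = sol (0 + 2) s := by
      intro s hs
      rw [hWeq s hs.1]
      exact hagree (s + 1) (0 + 2) s hs.1 (hmaxle s hs.1)
        (le_max_of_le_left (by linarith [hs.2]))
    have h1 := ((hsol (0 + 2)).2 0 ⟨le_rfl, le_max_of_le_left (by norm_num)⟩).2
    have h2 : HasDerivWithinAt (sol (0 + 2)) (f (sol (0 + 2) 0)) (Ici (0:ℝ)) 0 :=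
      h1.mono_of_mem_nhdsWithin (mem_nhdsWithin.2 ⟨Iio 1, isOpen_Iio, by norm_num,
        fun s hs => ⟨hs.2, hs.1.le.trans (le_max_of_le_left (by norm_num))⟩⟩)
    have hWsol0 : W 0 = sol (0 + 2) 0 := hkey 0 ⟨le_rfl, one_pos⟩
    have h3 : HasDerivWithinAt W (f (sol (0 + 2) 0)) (Ici (0:ℝ)) 0 := by
      refine h2.congr_of_eventuallyEq ?_ hWsol0
      filter_upwards [Ico_mem_nhdsGE_of_mem (⟨le_rfl, one_pos⟩ : (0:ℝ) ∈ Ico (0:ℝ) 1)]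
        with s hs
      exact hkey s hs
    have hlin : HasDerivWithinAt W (f (sol (0 + 2) 0)) (Iic (0:ℝ)) 0 := by
      have hd : HasDerivAt (fun s : ℝ => w₀ + s • f w₀) (f w₀) 0 := by
        simpa using ((hasDerivAt_id (0:ℝ)).smul_const (f w₀)).const_add w₀
      have hx0 : sol (0 + 2) 0 = w₀ := (hsol (0 + 2)).1
      rw [hx0]
      refine hd.hasDerivWithinAt.congr (fun s hs => ?_) (by simpa using hW0)
      by_cases h0 : (0:ℝ) ≤ s
      · have hs0 : s = 0 := le_antisymm hs h0
        subst hs0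
        simpa using hW0
      · simp only [hW_def, if_neg h0]
    have hu := hlin.union h3
    rw [Set.Iic_union_Ici, hasDerivWithinAt_univ] at hu
    rwa [← hWsol0] at hu
  · -- 0 < t
    have hkey : ∀ s ∈ Ioo (0:ℝ) (t + 1), W s = sol (t + 2) s := by
      intro s hs
      rw [hWeq s hs.1.le]
      exact hagree (s + 1) (t + 2) s hs.1.le (hmaxle s hs.1.le)
        (le_max_of_le_left (by linarith [hs.2]))
    have h1 := ((hsol (t + 2)).2 t ⟨ht', le_max_of_le_left (by linarith)⟩).2
    have hg : HasDerivAt (sol (t + 2)) (f (sol (t + 2) t)) t :=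
      h1.hasDerivAt (Icc_mem_nhds htpos (lt_of_lt_of_le (by linarith) (le_max_left _ _)))
    have hWg : W =ᶠ[nhds t] sol (t + 2) := by
      filter_upwards [Ioo_mem_nhds htpos (by linarith : t < t + 1)] with s hs
      exact hkey s hs
    have hfin := hg.congr_of_eventuallyEq hWg
    have hWt2 : W t = sol (t + 2) t := hkey t ⟨htpos, by linarith⟩
    rwa [← hWt2] at hfin
end

section
/- Let φ ∈ (0, π/2) with cos(φ) > 1/3, and let Γ ≥ 0 with Γ < tan(φ). For any g with |g| ≤ Γ and any θ ∈ (−φ, φ), define h(θ, g) = 2cos(θ)(cos(θ) − cos(φ)) + sin²(θ) + sin(θ)·g·(cos(θ) − 2cos(φ)). Then h(θ, g) ≥ 1 − cos(φ)/cos(arctan(Γ)) > 0. -/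
open Real

theorem stmt_5 (φ Γ : ℝ) (hφ : φ ∈ Set.Ioo 0 (π / 2)) (hc : cos φ > 1 / 3)
    (hΓ0 : 0 ≤ Γ) (hΓ : Γ < tan φ) :
    ∀ g : ℝ, |g| ≤ Γ → ∀ θ ∈ Set.Ioo (-φ) φ,
      2 * cos θ * (cos θ - cos φ) + sin θ ^ 2 + sin θ * g * (cos θ - 2 * cos φ)
          ≥ 1 - cos φ / cos (arctan Γ)
        ∧ 0 < 1 - cos φ / cos (arctan Γ) := by
  intro g hg θ hθ
  obtain ⟨hφ0, hφ2⟩ := hφ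
  have hpi : (0:ℝ) < π := pi_pos
  have hφπ : φ ≤ π := by linarith
  have hΩlt : arctan Γ < φ := by
    have h1 : arctan Γ < arctan (tan φ) := by
      exact arctan_strictMono hΓ
    rwa [arctan_tan (by linarith) hφ2] at h1
  have hΩ0 : 0 ≤ arctan Γ := by rw [← arctan_zero]; exact arctan_strictMono.monotone hΓ0
  have hcosφ : 0 < cos φ := cos_pos_of_mem_Ioo ⟨by linarith, hφ2⟩
  have hltcos : cos φ < cos (arctan Γ) :=
    cos_lt_cos_of_nonneg_of_le_pi hΩ0 hφπ hΩlt
  have hcosΩ : 0 < cos (arctan Γ) := by linarith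
  have hpos : 0 < 1 - cos φ / cos (arctan Γ) := by
    have : cos φ / cos (arctan Γ) < 1 := (div_lt_one hcosΩ).mpr hltcos
    linarith
  refine ⟨?_, hpos⟩
  set S := Real.sqrt (1 + Γ ^ 2) with hSdef
  have hS2 : S ^ 2 = 1 + Γ ^ 2 := Real.sq_sqrt (by positivity)
  have hSpos : 0 < S := Real.sqrt_pos.mpr (by positivity)
  have hdiv : cos φ / cos (arctan Γ) = cos φ * S := by
    rw [cos_arctan]
    field_simp [hSdef]
    exact hSdef.symm
  have hcc : cos φ < cos θ := by
    have habs : |θ| < φ := abs_lt.mpr ⟨hθ.1, hθ.2⟩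
    have := cos_lt_cos_of_nonneg_of_le_pi (abs_nonneg θ) hφπ habs
    rwa [cos_abs] at this
  have hg2 : g ^ 2 ≤ Γ ^ 2 := by
    have h := abs_le.mp hg
    nlinarith
  have hy2 : (cos θ + g * sin θ) ^ 2 ≤ S ^ 2 := by
    nlinarith [sin_sq_add_cos_sq θ, sq_nonneg (sin θ - g * cos θ), sq_nonneg (sin θ)]
  have hy : |cos θ + g * sin θ| ≤ S := by
    rw [← Real.sqrt_sq_eq_abs]
    calc Real.sqrt ((cos θ + g * sin θ) ^ 2) ≤ Real.sqrt (S ^ 2) :=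
          Real.sqrt_le_sqrt hy2
      _ = S := Real.sqrt_sq hSpos.le
  have hx : |cos θ - 2 * cos φ| ≤ cos φ := by
    rw [abs_le]
    constructor
    · linarith
    · have := cos_le_one θ
      linarith
  have habsprod : |(cos θ - 2 * cos φ) * (cos θ + g * sin θ)| ≤ cos φ * S := by
    rw [abs_mul]
    exact mul_le_mul hx hy (abs_nonneg _) hcosφ.le
  have hprod : (cos θ - 2 * cos φ) * (cos θ + g * sin θ) ≥ -(cos φ * S) := by
    have := neg_abs_le ((cos θ - 2 * cos φ) * (cos θ + g * sin θ))
    linarith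
  rw [hdiv]
  nlinarith [hprod, sin_sq_add_cos_sq θ]
end

section
/- Let κ > 0, ε ∈ (0,1), φ ∈ (0, π/2), and λ ∈ ℝ with ε⁻¹λ² + 1 < 1/cos²(φ). Define B(λ) = (√(κ²/(1−ε)² + 4(ε⁻¹λ² + 1)(κ cos(φ)/(1−ε) + 1)) − κ/(1−ε)) / (2(ε⁻¹λ² + 1)). Then cos(φ) < B(λ) < 1. -/
open Real

theorem stmt_8 (κ ε φ l : ℝ) (hκ : 0 < κ) (hε : ε ∈ Set.Ioo (0:ℝ) 1)
    (hφ : φ ∈ Set.Ioo 0 (π / 2)) (hl : ε⁻¹ * l ^ 2 + 1 < 1 / cos φ ^ 2) :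
    cos φ < (Real.sqrt (κ ^ 2 / (1 - ε) ^ 2 +
        4 * (ε⁻¹ * l ^ 2 + 1) * (κ * cos φ / (1 - ε) + 1)) - κ / (1 - ε)) /
        (2 * (ε⁻¹ * l ^ 2 + 1)) ∧
    (Real.sqrt (κ ^ 2 / (1 - ε) ^ 2 +
        4 * (ε⁻¹ * l ^ 2 + 1) * (κ * cos φ / (1 - ε) + 1)) - κ / (1 - ε)) /
        (2 * (ε⁻¹ * l ^ 2 + 1)) < 1 := by
  obtain ⟨hε0, hε1⟩ := hε
  obtain ⟨hφ0, hφ2⟩ := hφ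
  have hc0 : 0 < cos φ := Real.cos_pos_of_mem_Ioo ⟨by linarith [Real.pi_pos], hφ2⟩
  have hc1 : cos φ < 1 := by
    have := Real.cos_lt_cos_of_nonneg_of_le_pi le_rfl
      (by linarith [Real.pi_pos]) hφ0
    simpa using this
  have ha1 : (1:ℝ) ≤ ε⁻¹ * l ^ 2 + 1 := by
    have : 0 ≤ ε⁻¹ * l ^ 2 := by positivity
    linarith
  set a := ε⁻¹ * l ^ 2 + 1 with ha
  have ha0 : 0 < a := by linarith
  have h1ε : 0 < 1 - ε := by linarith
  set b := κ / (1 - ε) with hb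
  have hb0 : 0 < b := by positivity
  set D := κ ^ 2 / (1 - ε) ^ 2 + 4 * a * (κ * cos φ / (1 - ε) + 1) with hD
  have hDb : D = b ^ 2 + 4 * a * (b * cos φ + 1) := by
    rw [hD, hb]
    field_simp
  have hacos : a * cos φ ^ 2 < 1 := by
    rwa [lt_div_iff₀ (by positivity)] at hl
  constructor
  · rw [lt_div_iff₀ (by positivity)]
    have h : 2 * a * cos φ + b < Real.sqrt D := by
      rw [show (2*a*cos φ+b : ℝ) = Real.sqrt ((2*a*cos φ+b)^2) by
        rw [Real.sqrt_sq (by positivity)]]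
      exact Real.sqrt_lt_sqrt (by positivity) (by rw [hDb]; nlinarith)
    linarith
  · rw [div_lt_one (by positivity), sub_lt_iff_lt_add]
    have h : Real.sqrt D < 2 * a + b := by
      rw [show (2*a+b : ℝ) = Real.sqrt ((2*a+b)^2) by
        rw [Real.sqrt_sq (by positivity)]]
      refine Real.sqrt_lt_sqrt (by rw [hDb]; positivity) ?_
      rw [hDb]
      nlinarith [mul_pos (mul_pos ha0 hb0) (sub_pos.mpr hc1),
        mul_nonneg ha0.le (sub_nonneg.mpr ha1)]
    linarith
end

section
/- Let v_max > 0, f ∈ (0, v_max), θ with 1 ≥ cos(θ) > f/v_max, and r > 0. Then for any v ∈ (0, v_max) satisfying (v cos(θ) − f)² ≤ 2 r v (v_max − v), the discriminant 4(f cos(θ) + r v_max)² − 4 f²(2r + cos²(θ)) = 4r(r v_max² + 2 f (v_max cos(θ) − f)) is strictly positive, and v satisfies f²/(f cos(θ) + r v_max + √(r(r v_max² + 2 v_max f cos(θ) − 2f²))) ≤ v ≤ (f cos(θ) + r v_max + √(r(r v_max² + 2 v_max f cos(θ) − 2f²)))/(2r + cos²(θ)). -/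
open Real

set_option maxHeartbeats 1600000 in
theorem stmt_10 (vmax f θ r v : ℝ) (hvmax : 0 < vmax) (hf : f ∈ Set.Ioo 0 vmax)
    (hθ1 : cos θ ≤ 1) (hθ2 : f / vmax < cos θ) (hr : 0 < r)
    (hv : v ∈ Set.Ioo 0 vmax)
    (hquad : (v * cos θ - f) ^ 2 ≤ 2 * r * v * (vmax - v)) :
    (4 * (f * cos θ + r * vmax) ^ 2 - 4 * f ^ 2 * (2 * r + cos θ ^ 2)
        = 4 * r * (r * vmax ^ 2 + 2 * f * (vmax * cos θ - f)))
    ∧ 0 < 4 * r * (r * vmax ^ 2 + 2 * f * (vmax * cos θ - f))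
    ∧ f ^ 2 / (f * cos θ + r * vmax +
        Real.sqrt (r * (r * vmax ^ 2 + 2 * vmax * f * cos θ - 2 * f ^ 2))) ≤ v
    ∧ v ≤ (f * cos θ + r * vmax +
        Real.sqrt (r * (r * vmax ^ 2 + 2 * vmax * f * cos θ - 2 * f ^ 2))) /
        (2 * r + cos θ ^ 2) := by
  obtain ⟨hf0, hfv⟩ := hf
  obtain ⟨hv0, hvv⟩ := hv
  have hfc : f < vmax * cos θ := by
    rw [div_lt_iff₀ hvmax] at hθ2; linarith
  have hcpos : 0 < cos θ := lt_trans (div_pos hf0 hvmax) hθ2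
  have hapos : 0 < 2 * r + cos θ ^ 2 := by positivity
  have hbpos : 0 < f * cos θ + r * vmax := by positivity
  have hargpos' : 0 < r * (r * vmax ^ 2 + 2 * vmax * f * cos θ - 2 * f ^ 2) := by
    apply mul_pos hr
    nlinarith [sq_nonneg vmax]
  set a : ℝ := 2 * r + cos θ ^ 2 with ha
  set b : ℝ := f * cos θ + r * vmax with hb
  set arg : ℝ := r * (r * vmax ^ 2 + 2 * vmax * f * cos θ - 2 * f ^ 2) with harg
  set s : ℝ := Real.sqrt arg with hs
  have hargpos : 0 < arg := hargpos'
  have hs0 : 0 ≤ s := Real.sqrt_nonneg _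
  have hs2 : s ^ 2 = arg := Real.sq_sqrt hargpos.le
  have hba : b ^ 2 - a * f ^ 2 = arg := by simp only [ha, hb, harg]; ring
  have hs2' : s ^ 2 = b ^ 2 - a * f ^ 2 := hs2.trans hba.symm
  have hq2 : a * v ^ 2 - 2 * b * v + f ^ 2 ≤ 0 := by
    simp only [ha, hb]; nlinarith [hquad]
  clear_value a b arg s
  have hkey : (a * v - b) ^ 2 ≤ b ^ 2 - a * f ^ 2 := by
    nlinarith [mul_nonpos_of_nonneg_of_nonpos hapos.le hq2]
  have hle1 : a * v - b ≤ s := by nlinarith [hkey, hs2', hs0]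
  have hle2 : -s ≤ a * v - b := by nlinarith [hkey, hs2', hs0]
  have hbs : 0 < b + s := by linarith
  refine ⟨by simp only [ha, hb]; ring, by linarith [hargpos'], ?_, ?_⟩
  · rw [div_le_iff₀ hbs]
    nlinarith [mul_le_mul_of_nonneg_right hle2 hbs.le, hs2', hapos, hv0]
  · rw [le_div_iff₀ hapos]
    linarith
end

section
/- Let v_max > 0, σ̲, σ̄ with 0 < σ̲ ≤ σ̄ < v_max cos(φ) for some φ ∈ (0, π/2). Define ψ(x, y) = (xy + r v_max + √(r(r v_max² + 2 v_max x y − 2x²)))/(2r + y²) for x ∈ [σ̲, σ̄], y ∈ [cos(φ), 1], and r > 0 fixed. Then ψ is well-defined (the expression under the square root is positive) and ψ(x, y) < v_max for all such x, y; consequently sup over the compact set [σ̲, σ̄] × [cos(φ), 1] of ψ is attained and is strictly less than v_max. -/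
open Real

theorem stmt_11 (vmax σl σu φ r : ℝ) (hvmax : 0 < vmax)
    (hσl : 0 < σl) (hσ : σl ≤ σu) (hσu : σu < vmax * cos φ)
    (hφ : φ ∈ Set.Ioo 0 (π / 2)) (hr : 0 < r) :
    (∀ x ∈ Set.Icc σl σu, ∀ y ∈ Set.Icc (cos φ) 1,
      0 < r * (r * vmax ^ 2 + 2 * vmax * x * y - 2 * x ^ 2) ∧
      (x * y + r * vmax + Real.sqrt (r * (r * vmax ^ 2 + 2 * vmax * x * y - 2 * x ^ 2))) /
        (2 * r + y ^ 2) < vmax) ∧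
    ∃ x₀ ∈ Set.Icc σl σu, ∃ y₀ ∈ Set.Icc (cos φ) 1,
      (∀ x ∈ Set.Icc σl σu, ∀ y ∈ Set.Icc (cos φ) 1,
        (x * y + r * vmax + Real.sqrt (r * (r * vmax ^ 2 + 2 * vmax * x * y - 2 * x ^ 2))) /
          (2 * r + y ^ 2) ≤
        (x₀ * y₀ + r * vmax + Real.sqrt (r * (r * vmax ^ 2 + 2 * vmax * x₀ * y₀ - 2 * x₀ ^ 2))) /
          (2 * r + y₀ ^ 2)) ∧
      (x₀ * y₀ + r * vmax + Real.sqrt (r * (r * vmax ^ 2 + 2 * vmax * x₀ * y₀ - 2 * x₀ ^ 2))) /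
        (2 * r + y₀ ^ 2) < vmax := by
  have hcos : 0 < cos φ := by
    have hπ : 0 < π := Real.pi_pos
    exact Real.cos_pos_of_mem_Ioo ⟨by linarith [hφ.1], hφ.2⟩
  have key : ∀ x ∈ Set.Icc σl σu, ∀ y ∈ Set.Icc (cos φ) 1,
      0 < r * (r * vmax ^ 2 + 2 * vmax * x * y - 2 * x ^ 2) ∧
      (x * y + r * vmax + Real.sqrt (r * (r * vmax ^ 2 + 2 * vmax * x * y - 2 * x ^ 2))) /
        (2 * r + y ^ 2) < vmax := by
    intro x hx y hy
    obtain ⟨hx1, hx2⟩ := hx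
    obtain ⟨hy1, hy2⟩ := hy
    have hxpos : 0 < x := lt_of_lt_of_le hσl hx1
    have hxy : x < vmax * y := by nlinarith
    have hd : 0 < vmax * y - x := by linarith
    have hApos : 0 < r * (r * vmax ^ 2 + 2 * vmax * x * y - 2 * x ^ 2) := by
      nlinarith [mul_pos hxpos hd, mul_pos hr hvmax, sq_nonneg vmax]
    refine ⟨hApos, ?_⟩
    have hden : 0 < 2 * r + y ^ 2 := by positivity
    rw [div_lt_iff₀ hden]
    have hB : 0 < r * vmax + y * (vmax * y - x) := by nlinarith
    have hsqrt : Real.sqrt (r * (r * vmax ^ 2 + 2 * vmax * x * y - 2 * x ^ 2))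
        < r * vmax + y * (vmax * y - x) := by
      rw [Real.sqrt_lt' hB]
      nlinarith [mul_pos hr (mul_pos hd hd), mul_nonneg (sq_nonneg y) (mul_pos hd hd).le]
    nlinarith
  refine ⟨key, ?_⟩
  set f : ℝ × ℝ → ℝ := fun p =>
    (p.1 * p.2 + r * vmax + Real.sqrt (r * (r * vmax ^ 2 + 2 * vmax * p.1 * p.2 - 2 * p.1 ^ 2))) /
      (2 * r + p.2 ^ 2) with hf
  have hcont : Continuous f := by
    apply Continuous.div
    · fun_prop
    · fun_prop
    · intro p
      have : 0 < 2 * r + p.2 ^ 2 := by positivity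
      exact ne_of_gt this
  have hK : IsCompact (Set.Icc σl σu ×ˢ Set.Icc (cos φ) 1) :=
    (isCompact_Icc).prod isCompact_Icc
  have hne : (Set.Icc σl σu ×ˢ Set.Icc (cos φ) 1).Nonempty := by
    refine ⟨(σl, cos φ), ?_⟩
    constructor
    · exact ⟨le_refl _, hσ⟩
    · exact ⟨le_refl _, Real.cos_le_one φ⟩
  obtain ⟨p₀, hp₀, hmax⟩ := hK.exists_isMaxOn hne hcont.continuousOn
  refine ⟨p₀.1, hp₀.1, p₀.2, hp₀.2, ?_, ?_⟩
  · intro x hx y hy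
    exact hmax (Set.mk_mem_prod hx hy)
  · exact (key p₀.1 hp₀.1 p₀.2 hp₀.2).2
end
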